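/- Consider the negative feedback walk on a rooted tree of depth $H$ where each non-leaf node has at most $b$ children, started at the root. Then every node is visited at most $2(b+1)H$ times before all nodes have been visited at least once. -/
import Mathlib


open Finset
open scoped Classical

/-- `transCount w t i j`: the number of transitions from node `i` to node `j` made by
the trajectory `w` before time `t`. -/
noncomputable def transCount {V : Type*} (w : ℕ → V) (t : ℕ) (i j : V) : ℕ :=
  ((Finset.range t).filter (fun s => w s = i ∧ w (s + 1) = j)).card

/-- A trajectory `w` is admissible for the negative feedback ("favor least") walk on the
graph with adjacency relation `Adj`: each step goes to a neighbour of the current node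
whose prior transition count from the current node is minimal. -/
def IsNegFeedbackWalk {V : Type*} (Adj : V → V → Prop) (w : ℕ → V) : Prop :=
  ∀ t : ℕ, Adj (w t) (w (t + 1)) ∧
    ∀ j : V, Adj (w t) j → transCount w t (w t) (w (t + 1)) ≤ transCount w t (w t) j

/-- Adjacency relation of a rooted tree given by its parent map: two distinct nodes are
adjacent iff one is the parent of the other. -/
def treeAdj {V : Type*} (parent : V → V) (i j : V) : Prop :=
  i ≠ j ∧ (parent i = j ∨ parent j = i)

section Aux

variable {V : Type*}

lemma transCount_mono (w : ℕ → V) {t t' : ℕ} (h : t ≤ t') (i j : V) :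
    transCount w t i j ≤ transCount w t' i j :=
  Finset.card_le_card (Finset.filter_subset_filter _ (Finset.range_subset_range.2 h))

lemma transCount_succ (w : ℕ → V) (t : ℕ) (i j : V) :
    transCount w (t + 1) i j
      = transCount w t i j + (if w t = i ∧ w (t + 1) = j then 1 else 0) := by
  unfold transCount
  rw [Finset.range_add_one, Finset.filter_insert]
  split_ifs with h
  · rw [Finset.card_insert_of_notMem (by simp)]
  · rw [add_zero]

lemma transCount_exists {w : ℕ → V} {n : ℕ} {i j : V} (h : transCount w n i j ≠ 0) :
    ∃ s, s < n ∧ w s = i ∧ w (s + 1) = j := by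
  obtain ⟨s, hs⟩ := Finset.card_pos.mp (Nat.pos_of_ne_zero h)
  rw [Finset.mem_filter, Finset.mem_range] at hs
  exact ⟨s, hs.1, hs.2⟩

/-- The last transition from `i` to `j` before time `n`. -/
lemma transCount_last {w : ℕ → V} {n : ℕ} {i j : V} (h : transCount w n i j ≠ 0) :
    ∃ s, s < n ∧ w s = i ∧ w (s + 1) = j ∧
      transCount w n i j ≤ transCount w s i j + 1 := by
  classical
  have hne : ((Finset.range n).filter (fun s => w s = i ∧ w (s + 1) = j)).Nonempty :=
    Finset.card_pos.mp (Nat.pos_of_ne_zero h)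
  set T := (Finset.range n).filter (fun s => w s = i ∧ w (s + 1) = j) with hT
  set s := T.max' hne with hs
  have hsT : s ∈ T := T.max'_mem hne
  rw [hT, Finset.mem_filter, Finset.mem_range] at hsT
  refine ⟨s, hsT.1, hsT.2.1, hsT.2.2, ?_⟩
  have hsub : T ⊆ (Finset.range (s + 1)).filter (fun u => w u = i ∧ w (u + 1) = j) := by
    intro u hu
    have hle := T.le_max' u hu
    rw [hT, Finset.mem_filter, Finset.mem_range] at hu
    rw [Finset.mem_filter, Finset.mem_range]
    exact ⟨Nat.lt_succ_of_le hle, hu.2⟩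
  have hcard : transCount w n i j ≤ transCount w (s + 1) i j := Finset.card_le_card hsub
  rwa [transCount_succ, if_pos ⟨hsT.2.1, hsT.2.2⟩] at hcard

lemma exists_cross (w : ℕ → V) (S : V → Prop) :
    ∀ t2 t1, t1 ≤ t2 → ¬ S (w t1) → S (w t2) →
      ∃ s, t1 ≤ s ∧ s < t2 ∧ ¬ S (w s) ∧ S (w (s + 1)) := by
  intro t2
  induction t2 with
  | zero =>
    intro t1 hle h1 h2
    have : t1 = 0 := Nat.le_zero.mp hle
    rw [this] at h1
    exact absurd h2 h1
  | succ t2 ih =>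
    intro t1 hle h1 h2
    rcases Nat.eq_or_lt_of_le hle with he | hlt
    · rw [he] at h1; exact absurd h2 h1
    · have hle2 : t1 ≤ t2 := Nat.lt_succ_iff.mp hlt
      by_cases hS : S (w t2)
      · obtain ⟨s, a, b, c, d⟩ := ih t1 hle2 h1 hS
        exact ⟨s, a, Nat.lt_succ_of_lt b, c, d⟩
      · exact ⟨t2, hle2, Nat.lt_succ_self _, hS, h2⟩

/-- Balance: the counts of moves out of a node towards two neighbours differ by at
most one along a negative feedback walk. -/
lemma nfw_balance {A : V → V → Prop} {w : ℕ → V} (hw : IsNegFeedbackWalk A w)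
    {i c : V} (hc : A i c) (a : V) (t : ℕ) :
    transCount w t i a ≤ transCount w t i c + 1 := by
  induction t with
  | zero => simp [transCount]
  | succ t ih =>
    rw [transCount_succ, transCount_succ]
    by_cases h1 : w t = i ∧ w (t + 1) = a
    · have hmin := (hw t).2 c (by rw [h1.1]; exact hc)
      rw [h1.1, h1.2] at hmin
      rw [if_pos h1]
      split_ifs <;> omega
    · rw [if_neg h1]
      split_ifs <;> omega

variable {parent : V → V} {r : V} {H : ℕ}

/-- `v` is in the subtree rooted at `z`. -/
def inSub (parent : V → V) (z v : V) : Prop := ∃ k, parent^[k] v = z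

lemma inSub_self (z : V) : inSub parent z z := ⟨0, rfl⟩

lemma iterate_parent_root (hroot : parent r = r) : ∀ k, parent^[k] r = r := by
  intro k
  induction k with
  | zero => rfl
  | succ k ih => rw [Function.iterate_succ_apply', ih, hroot]

lemma eq_root_of_iterate (hroot : parent r = r) (hdepth : ∀ v : V, parent^[H] v = r)
    {z : V} {k : ℕ} (hk : parent^[k + 1] z = z) : z = r := by
  have h1 : ∀ j, parent^[(k + 1) * j] z = z := by
    intro j
    induction j with
    | zero => simp
    | succ j ih =>
      rw [Nat.mul_succ, Function.iterate_add_apply, hk, ih]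
  have hM : H ≤ (k + 1) * H := Nat.le_mul_of_pos_left H (Nat.succ_pos k)
  have hsplit : (k + 1) * H = ((k + 1) * H - H) + H := by omega
  have h2 : parent^[(k + 1) * H] z = r := by
    rw [hsplit, Function.iterate_add_apply, hdepth z, iterate_parent_root hroot]
  rw [h1 H] at h2
  exact h2

lemma parent_ne_self (hroot : parent r = r) (hdepth : ∀ v : V, parent^[H] v = r)
    {z : V} (hz : z ≠ r) : parent z ≠ z := by
  intro h
  exact hz (eq_root_of_iterate hroot hdepth (k := 0) (by simpa using h))

lemma not_inSub_parent (hroot : parent r = r) (hdepth : ∀ v : V, parent^[H] v = r)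
    {z : V} (hz : z ≠ r) : ¬ inSub parent z (parent z) := by
  rintro ⟨k, hk⟩
  refine hz (eq_root_of_iterate hroot hdepth (k := k) ?_)
  rw [Function.iterate_succ_apply]
  exact hk

lemma not_inSub_gparent (hroot : parent r = r) (hdepth : ∀ v : V, parent^[H] v = r)
    {z : V} (hz : z ≠ r) : ¬ inSub parent z (parent (parent z)) := by
  rintro ⟨k, hk⟩
  refine hz (eq_root_of_iterate hroot hdepth (k := k + 1) ?_)
  rw [Function.iterate_succ_apply, Function.iterate_succ_apply]
  exact hk

lemma not_inSub_root (hroot : parent r = r) {z : V} (hz : z ≠ r) :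
    ¬ inSub parent z r := by
  rintro ⟨k, hk⟩
  rw [iterate_parent_root hroot] at hk
  exact hz hk.symm

lemma enter_sub (hroot : parent r = r) (hdepth : ∀ v : V, parent^[H] v = r)
    {z a c : V} (hz : z ≠ r) (hadj : treeAdj parent a c)
    (ha : ¬ inSub parent z a) (hc : inSub parent z c) : a = parent z ∧ c = z := by
  obtain ⟨k, hk⟩ := hc
  rcases hadj.2 with h1 | h2
  · exact absurd ⟨k + 1, by rw [Function.iterate_succ_apply, h1, hk]⟩ ha
  · cases k with
    | zero =>
      simp only [Function.iterate_zero_apply] at hk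
      exact ⟨by rw [← hk]; exact h2.symm, hk⟩
    | succ k =>
      rw [Function.iterate_succ_apply, h2] at hk
      exact absurd ⟨k, hk⟩ ha

lemma exit_sub (hroot : parent r = r) (hdepth : ∀ v : V, parent^[H] v = r)
    {z a c : V} (hz : z ≠ r) (hadj : treeAdj parent a c)
    (ha : inSub parent z a) (hc : ¬ inSub parent z c) : a = z ∧ c = parent z := by
  obtain ⟨k, hk⟩ := ha
  rcases hadj.2 with h1 | h2
  · cases k with
    | zero =>
      simp only [Function.iterate_zero_apply] at hk
      exact ⟨hk, by rw [← hk]; exact h1.symm⟩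
    | succ k =>
      rw [Function.iterate_succ_apply, h1] at hk
      exact absurd ⟨k, hk⟩ hc
  · exact absurd ⟨k + 1, by rw [Function.iterate_succ_apply, h2, hk]⟩ hc

/-- Crossing identity: the number of entries into the subtree of `z` equals the number
of exits plus one iff the walk is currently inside the subtree. -/
lemma crossing (hroot : parent r = r) (hdepth : ∀ v : V, parent^[H] v = r)
    {w : ℕ → V} (hw : IsNegFeedbackWalk (treeAdj parent) w) (h0 : w 0 = r)
    {z : V} (hz : z ≠ r) (t : ℕ) :
    transCount w t (parent z) z
      = transCount w t z (parent z) + (if inSub parent z (w t) then 1 else 0) := by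
  have hnp : ¬ inSub parent z (parent z) := not_inSub_parent hroot hdepth hz
  induction t with
  | zero =>
    have h0' : ¬ inSub parent z (w 0) := by rw [h0]; exact not_inSub_root hroot hz
    simp [transCount, h0']
  | succ t ih =>
    rw [transCount_succ, transCount_succ, ih]
    by_cases h1 : inSub parent z (w t) <;> by_cases h2 : inSub parent z (w (t + 1))
    · -- stays inside: no crossing move possible
      have c1 : ¬ (w t = parent z ∧ w (t + 1) = z) := fun hcon =>
        hnp (by rw [← hcon.1]; exact h1)
      have c2 : ¬ (w t = z ∧ w (t + 1) = parent z) := fun hcon =>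
        hnp (by rw [← hcon.2]; exact h2)
      rw [if_pos h1, if_pos h2, if_neg c1, if_neg c2]
    · -- exit
      obtain ⟨ea, ec⟩ := exit_sub hroot hdepth hz (hw t).1 h1 h2
      have c1 : ¬ (w t = parent z ∧ w (t + 1) = z) := fun hcon =>
        hnp (by rw [← hcon.1]; exact h1)
      rw [if_pos h1, if_neg h2, if_neg c1, if_pos ⟨ea, ec⟩]
    · -- enter
      obtain ⟨ea, ec⟩ := enter_sub hroot hdepth hz (hw t).1 h1 h2
      have c2 : ¬ (w t = z ∧ w (t + 1) = parent z) := fun hcon =>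
        h1 (by rw [hcon.1]; exact inSub_self z)
      rw [if_neg h1, if_pos h2, if_pos ⟨ea, ec⟩, if_neg c2]
    · have c1 : ¬ (w t = parent z ∧ w (t + 1) = z) := fun hcon =>
        h2 (by rw [hcon.2]; exact inSub_self z)
      have c2 : ¬ (w t = z ∧ w (t + 1) = parent z) := fun hcon =>
        h1 (by rw [hcon.1]; exact inSub_self z)
      rw [if_neg h1, if_neg h2, if_neg c1, if_neg c2]

/-- Downward step: the walk enters the subtree of `z` at most as often as it enters
the subtree of its parent. -/
lemma down_step (hroot : parent r = r) (hdepth : ∀ v : V, parent^[H] v = r)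
    {w : ℕ → V} (hw : IsNegFeedbackWalk (treeAdj parent) w) (h0 : w 0 = r)
    {z : V} (hz : z ≠ r) (hp : parent z ≠ r) (n : ℕ) :
    transCount w n (parent z) z ≤ transCount w n (parent (parent z)) (parent z) := by
  have hadj_yz : treeAdj parent (parent z) z :=
    ⟨parent_ne_self hroot hdepth hz, Or.inr rfl⟩
  have hadj_yg : treeAdj parent (parent z) (parent (parent z)) :=
    ⟨(parent_ne_self hroot hdepth hp).symm, Or.inl rfl⟩
  have hcr := crossing hroot hdepth hw h0 hp n
  by_cases hind : inSub parent (parent z) (w n)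
  · have hbal := nfw_balance hw hadj_yg z n
    rw [if_pos hind] at hcr
    omega
  · rw [if_neg hind, add_zero] at hcr
    by_cases h00 : transCount w n (parent z) z = 0
    · omega
    · obtain ⟨s, hsn, hws, hws1, hle⟩ := transCount_last h00
      have hs1_in : inSub parent (parent z) (w (s + 1)) := by
        rw [hws1]; exact ⟨1, by simp⟩
      obtain ⟨u, hu1, hu2, hu3, hu4⟩ :=
        exists_cross w (fun v => ¬ inSub parent (parent z) v) n (s + 1) hsn
          (not_not_intro hs1_in) hind
      obtain ⟨ea, ec⟩ := exit_sub hroot hdepth hp (hw u).1 (not_not.mp hu3) hu4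
      have e1 : transCount w s (parent z) z ≤ transCount w s (parent z) (parent (parent z)) := by
        have := (hw s).2 (parent (parent z)) (by rw [hws]; exact hadj_yg)
        rwa [hws, hws1] at this
      have e2 : transCount w s (parent z) (parent (parent z))
          ≤ transCount w u (parent z) (parent (parent z)) :=
        transCount_mono w (by omega) _ _
      have e3 : transCount w (u + 1) (parent z) (parent (parent z))
          = transCount w u (parent z) (parent (parent z)) + 1 := by
        rw [transCount_succ, if_pos ⟨ea, ec⟩]
      have e4 : transCount w (u + 1) (parent z) (parent (parent z))
          ≤ transCount w n (parent z) (parent (parent z)) :=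
        transCount_mono w (by omega) _ _
      omega

/-- Upward step: moves from the parent of `z` further up are bounded by moves from `z`
to its parent, plus one. -/
lemma up_step (hroot : parent r = r) (hdepth : ∀ v : V, parent^[H] v = r)
    {w : ℕ → V} (hw : IsNegFeedbackWalk (treeAdj parent) w) (h0 : w 0 = r)
    {z : V} (hz : z ≠ r) (hp : parent z ≠ r) (n : ℕ) :
    transCount w n (parent z) (parent (parent z)) ≤ transCount w n z (parent z) + 1 := by
  have hadj_yz : treeAdj parent (parent z) z :=
    ⟨parent_ne_self hroot hdepth hz, Or.inr rfl⟩
  have hadj_yg : treeAdj parent (parent z) (parent (parent z)) :=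
    ⟨(parent_ne_self hroot hdepth hp).symm, Or.inl rfl⟩
  have hcr := crossing hroot hdepth hw h0 hz n
  by_cases hind : inSub parent z (w n)
  · rw [if_pos hind] at hcr
    by_cases h00 : transCount w n (parent z) (parent (parent z)) = 0
    · omega
    · obtain ⟨s, hsn, hws, hws1, hle⟩ := transCount_last h00
      have hs1_out : ¬ inSub parent z (w (s + 1)) := by
        rw [hws1]; exact not_inSub_gparent hroot hdepth hz
      obtain ⟨u, hu1, hu2, hu3, hu4⟩ :=
        exists_cross w (fun v => inSub parent z v) n (s + 1) hsn hs1_out hind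
      obtain ⟨ea, ec⟩ := enter_sub hroot hdepth hz (hw u).1 hu3 hu4
      have e1 : transCount w s (parent z) (parent (parent z))
          ≤ transCount w s (parent z) z := by
        have := (hw s).2 z (by rw [hws]; exact hadj_yz)
        rwa [hws, hws1] at this
      have e2 : transCount w s (parent z) z ≤ transCount w u (parent z) z :=
        transCount_mono w (by omega) _ _
      have e3 : transCount w (u + 1) (parent z) z = transCount w u (parent z) z + 1 := by
        rw [transCount_succ, if_pos ⟨ea, ec⟩]
      have e4 : transCount w (u + 1) (parent z) z ≤ transCount w n (parent z) z :=
        transCount_mono w (by omega) _ _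
      omega
  · rw [if_neg hind, add_zero] at hcr
    have hbal := nfw_balance hw hadj_yz (parent (parent z)) n
    omega

lemma transCount_to_unvisited {w : ℕ → V} {n : ℕ} {x : V} (hx : ∀ t ≤ n, w t ≠ x)
    (i : V) : transCount w n i x = 0 := by
  unfold transCount
  rw [Finset.card_eq_zero, Finset.filter_eq_empty_iff]
  intro s hs
  rw [Finset.mem_range] at hs
  exact fun hcon => hx (s + 1) (by omega) hcon.2

lemma transCount_from_unvisited {w : ℕ → V} {n : ℕ} {x : V} (hx : ∀ t ≤ n, w t ≠ x)
    (j : V) : transCount w n x j = 0 := by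
  unfold transCount
  rw [Finset.card_eq_zero, Finset.filter_eq_empty_iff]
  intro s hs
  rw [Finset.mem_range] at hs
  exact fun hcon => hx s (by omega) hcon.1

lemma visits_eq [Fintype V] [DecidableEq V] (w : ℕ → V) (n : ℕ) (v : V) :
    ((Finset.range (n + 1)).filter (fun t => w t = v)).card
      = (∑ j : V, transCount w n v j) + (if w n = v then 1 else 0) := by
  have key : ((Finset.range n).filter (fun t => w t = v)).card
      = ∑ j : V, transCount w n v j := by
    rw [Finset.card_eq_sum_card_fiberwise
      (f := fun s => w (s + 1)) (t := Finset.univ) (fun x _ => Finset.mem_univ _)]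
    refine Finset.sum_congr rfl fun j _ => ?_
    rw [Finset.filter_filter]
    simp only [transCount]
    congr
  rw [Finset.range_add_one, Finset.filter_insert]
  split_ifs with h
  · rw [Finset.card_insert_of_notMem (by simp), key]
  · rw [key, add_zero]

end Aux

/-- on a rooted tree of depth at most `H` in which every node has at most
`b` children, along any negative feedback walk started at the root, as long as some node
is still unvisited every node has been visited at most `2(b+1)H` times. -/
theorem tree_negFeedback_node_visits {V : Type*} [Fintype V] [DecidableEq V]
    (parent : V → V) (r : V) (H b : ℕ)
    (hroot : parent r = r)
    (hdepth : ∀ v : V, parent^[H] v = r)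
    (hchild : ∀ v : V, (Finset.univ.filter (fun u => parent u = v ∧ u ≠ r)).card ≤ b)
    (w : ℕ → V) (hw : IsNegFeedbackWalk (treeAdj parent) w) (h0 : w 0 = r)
    (n : ℕ) (hn : ∃ v : V, ∀ t ≤ n, w t ≠ v) :
    ∀ v : V, ((Finset.range (n + 1)).filter (fun t => w t = v)).card ≤ 2 * (b + 1) * H := by
  obtain ⟨x, hx⟩ := hn
  have hxr : x ≠ r := fun h => hx 0 (Nat.zero_le n) (h0.trans h.symm)
  have hH : 1 ≤ H := by
    by_contra h
    have hH0 : H = 0 := by omega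
    have := hdepth x
    rw [hH0, Function.iterate_zero_apply] at this
    exact hxr this
  have hb : 1 ≤ b := by
    have hpos : 0 < (Finset.univ.filter (fun u => parent u = parent x ∧ u ≠ r)).card :=
      Finset.card_pos.mpr ⟨x, Finset.mem_filter.mpr ⟨Finset.mem_univ x, rfl, hxr⟩⟩
    exact lt_of_lt_of_le hpos (hchild (parent x))
  -- the distance from the unvisited node x to the root
  have hex : ∃ k, parent^[k] x = r := ⟨H, hdepth x⟩
  set m := Nat.find hex with hmdef
  have hmspec : parent^[m] x = r := Nat.find_spec hex
  have hmH : m ≤ H := Nat.find_min' hex (hdepth x)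
  have hm1 : 1 ≤ m := by
    rcases Nat.eq_zero_or_pos m with h | h
    · rw [h, Function.iterate_zero_apply] at hmspec; exact absurd hmspec hxr
    · exact h
  have hmin : ∀ k, k < m → parent^[k] x ≠ r := fun k hk => Nat.find_min hex hk
  -- bound the upward transition counts along the path from x to the root
  have chain : ∀ k, k + 1 ≤ m → transCount w n (parent^[k] x) (parent^[k + 1] x) ≤ k := by
    intro k
    induction k with
    | zero =>
      intro _
      have h00 : transCount w n x (parent^[0 + 1] x) = 0 := transCount_from_unvisited hx _
      simpa using h00
    | succ k ih =>
      intro hk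
      have h1 : parent^[k] x ≠ r := hmin k (by omega)
      have h2 : parent^[k + 1] x ≠ r := hmin (k + 1) (by omega)
      have h2' : parent (parent^[k] x) ≠ r := by
        rwa [← Function.iterate_succ_apply' parent k x]
      have hup := up_step hroot hdepth hw h0 h1 h2' n
      have hih := ih (by omega)
      simp only [← Function.iterate_succ_apply' parent, Nat.succ_eq_add_one] at hup
      omega
  -- bound for moves from the root towards x
  have hxc : parent^[m - 1] x ≠ r := hmin (m - 1) (by omega)
  have hxc_par : parent (parent^[m - 1] x) = r := by
    have h' : parent^[m - 1 + 1] x = r := by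
      rw [show m - 1 + 1 = m by omega]; exact hmspec
    rwa [Function.iterate_succ_apply'] at h'
  have rootb : transCount w n r (parent^[m - 1] x) ≤ m := by
    have hcr := crossing hroot hdepth hw h0 hxc n
    rw [hxc_par] at hcr
    have hch := chain (m - 1) (by omega)
    rw [show m - 1 + 1 = m by omega, hmspec] at hch
    have hind : (if inSub parent (parent^[m - 1] x) (w n) then 1 else 0) ≤ 1 := by
      split_ifs <;> omega
    omega
  have hadj_rxc : treeAdj parent r (parent^[m - 1] x) := ⟨Ne.symm hxc, Or.inr hxc_par⟩
  -- every downward count is at most m + 1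
  have dbound : ∀ k, ∀ v : V, v ≠ r → parent^[k] v = r →
      transCount w n (parent v) v ≤ m + 1 := by
    intro k
    induction k with
    | zero => intro v hv hvr; exact absurd hvr hv
    | succ k ih =>
      intro v hv hvr
      by_cases hp : parent v = r
      · rw [hp]
        have hbal := nfw_balance hw hadj_rxc v n
        omega
      · have hvr' : parent^[k] (parent v) = r := by
          rwa [← Function.iterate_succ_apply]
        have hih := ih (parent v) hp hvr'
        have hd := down_step hroot hdepth hw h0 hv hp n
        omega
  -- final count for each vertex v
  intro v
  rw [visits_eq]
  have hind1 : (if w n = v then 1 else 0) ≤ 1 := by split_ifs <;> omega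
  by_cases hv : v = r
  · -- the root
    subst hv
    have hsub : ∀ j : V, transCount w n v j ≠ 0 →
        j ∈ Finset.univ.filter (fun u => parent u = v ∧ u ≠ v) := by
      intro j hj
      obtain ⟨s, _, hws, hws1⟩ := transCount_exists hj
      have hadj := (hw s).1
      rw [hws, hws1] at hadj
      rcases hadj.2 with h | h
      · exact absurd (hroot.symm.trans h) hadj.1
      · exact Finset.mem_filter.mpr ⟨Finset.mem_univ _, h, Ne.symm hadj.1⟩
    have hsum : (∑ j : V, transCount w n v j)
        = ∑ j ∈ Finset.univ.filter (fun u => parent u = v ∧ u ≠ v), transCount w n v j := by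
      refine (Finset.sum_subset (Finset.subset_univ _) fun j _ hj => ?_).symm
      by_contra hne
      exact hj (hsub j hne)
    have hsumle : (∑ j ∈ Finset.univ.filter (fun u => parent u = v ∧ u ≠ v),
        transCount w n v j) ≤ b * (m + 1) := by
      calc (∑ j ∈ Finset.univ.filter (fun u => parent u = v ∧ u ≠ v), transCount w n v j)
          ≤ (Finset.univ.filter (fun u => parent u = v ∧ u ≠ v)).card * (m + 1) := by
            rw [← smul_eq_mul]
            refine Finset.sum_le_card_nsmul _ _ _ fun j hj => ?_
            have hbal := nfw_balance hw hadj_rxc j n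
            omega
        _ ≤ b * (m + 1) := Nat.mul_le_mul_right _ (hchild v)
    have l1 : b * (m + 1) ≤ b * (H + 1) := Nat.mul_le_mul_left _ (by omega)
    have l2 : b * (H + 1) = b * H + b := by ring
    have l3 : 2 * (b + 1) * H = 2 * (b * H) + 2 * H := by ring
    have l4 : b ≤ b * H := Nat.le_mul_of_pos_right b (by omega)
    omega
  · -- a non-root vertex
    have hadj_vp : treeAdj parent v (parent v) :=
      ⟨(parent_ne_self hroot hdepth hv).symm, Or.inl rfl⟩
    have hdv : transCount w n (parent v) v ≤ m + 1 := dbound H v hv (hdepth v)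
    have hvp : transCount w n v (parent v) ≤ m + 1 := by
      have hcr := crossing hroot hdepth hw h0 hv n
      have : transCount w n v (parent v) ≤ transCount w n (parent v) v := by
        rw [hcr]; exact Nat.le_add_right _ _
      omega
    have hpnotch : parent v ∉ Finset.univ.filter (fun u => parent u = v ∧ u ≠ r) := by
      intro hmem
      rw [Finset.mem_filter] at hmem
      refine hv (eq_root_of_iterate hroot hdepth (k := 1) ?_)
      rw [Function.iterate_succ_apply, Function.iterate_succ_apply,
        Function.iterate_zero_apply]
      exact hmem.2.1
    have hsub : ∀ j : V, transCount w n v j ≠ 0 →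
        j ∈ insert (parent v) (Finset.univ.filter (fun u => parent u = v ∧ u ≠ r)) := by
      intro j hj
      obtain ⟨s, _, hws, hws1⟩ := transCount_exists hj
      have hadj := (hw s).1
      rw [hws, hws1] at hadj
      rcases hadj.2 with h | h
      · exact Finset.mem_insert.mpr (Or.inl h.symm)
      · refine Finset.mem_insert.mpr (Or.inr (Finset.mem_filter.mpr
          ⟨Finset.mem_univ _, h, ?_⟩))
        intro hjr
        rw [hjr, hroot] at h
        exact hv h.symm
    have hsum : (∑ j : V, transCount w n v j)
        = transCount w n v (parent v)
          + ∑ j ∈ Finset.univ.filter (fun u => parent u = v ∧ u ≠ r), transCount w n v j := by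
      rw [← Finset.sum_insert hpnotch]
      refine (Finset.sum_subset (Finset.subset_univ _) fun j _ hj => ?_).symm
      by_contra hne
      exact hj (hsub j hne)
    have hchsum : (∑ j ∈ Finset.univ.filter (fun u => parent u = v ∧ u ≠ r),
        transCount w n v j)
        ≤ (Finset.univ.filter (fun u => parent u = v ∧ u ≠ r)).card * (m + 2) := by
      rw [← smul_eq_mul]
      refine Finset.sum_le_card_nsmul _ _ _ fun j hj => ?_
      have hbal := nfw_balance hw hadj_vp j n
      omega
    by_cases hH1 : H = 1
    · -- depth one: non-root vertices have no children
      have hchE : (Finset.univ.filter (fun u => parent u = v ∧ u ≠ r)) = ∅ := by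
        rw [Finset.eq_empty_iff_forall_notMem]
        intro u hu
        rw [Finset.mem_filter] at hu
        have hud := hdepth u
        rw [hH1, Function.iterate_one] at hud
        exact hv (hu.2.1.symm.trans hud)
      rw [hchE] at hsum
      simp only [Finset.sum_empty, add_zero] at hsum
      have hm1' : m ≤ 1 := by omega
      have : 2 * (b + 1) * H = 2 * b + 2 := by rw [hH1]; ring
      omega
    · -- depth at least two
      have hH2 : 2 ≤ H := by omega
      have hcard : (Finset.univ.filter (fun u => parent u = v ∧ u ≠ r)).card ≤ b :=
        hchild v
      have l0 : (Finset.univ.filter (fun u => parent u = v ∧ u ≠ r)).card * (m + 2)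
          ≤ b * (m + 2) := Nat.mul_le_mul_right _ hcard
      have l1 : b * (m + 2) ≤ b * (H + 2) := Nat.mul_le_mul_left _ (by omega)
      have l2 : b * (H + 2) = b * H + 2 * b := by ring
      have l3 : 2 * (b + 1) * H = 2 * (b * H) + 2 * H := by ring
      have l4 : 2 * b ≤ b * H := by
        calc 2 * b = b * 2 := by ring
          _ ≤ b * H := Nat.mul_le_mul_left _ hH2
      omega
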